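/- Let p_1,…,p_q ≥ 1 be integers with sum p < n and max_{1≤i≤q} p_i ≤ η p for some η ∈ (0,1). Then σ_n² = 2{Σ_{i=1}^q log(1 − p_i/n) − log(1 − p/n)} ≥ −2(1 − η)(log(1 − p/n) + p/n) > 0; consequently, along any sequence of such configurations with inf_n p/n > 0 and sup_n p/n < 1 one has inf_n σ_n² > 0. -/

import Mathlib

open MeasureTheory ProbabilityTheory Filter Matrix Finset Topology

noncomputable section

/-- The matrix (w.r.t. the standard basis) of the orthogonal projection of `ℝⁿ`
onto the orthogonal complement of the span of a set `S` of vectors. -/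
def projCompl {n : ℕ} (S : Set (EuclideanSpace ℝ (Fin n))) :
    Matrix (Fin n) (Fin n) ℝ :=
  Matrix.toEuclideanLin.symm
    ((Submodule.span ℝ S)ᗮ.subtypeL.toLinearMap ∘ₗ
      (Submodule.orthogonalProjection (Submodule.span ℝ S)ᗮ).toLinearMap)

/-- The quadratic form `vᵀ A v`. -/
def quadForm {n : ℕ} (A : Matrix (Fin n) (Fin n) ℝ) (v : Fin n → ℝ) : ℝ :=
  v ⬝ᵥ A.mulVec v

/-- `σ_n² = 2{Σ_{i=1}^q log(1 - p_i/n) - log(1 - p/n)}`. -/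
def sigSq (n p q : ℕ) (psz : ℕ → ℕ) : ℝ :=
  2 * ((∑ j ∈ Finset.range q, Real.log (1 - (psz j : ℝ) / n)) -
    Real.log (1 - (p : ℝ) / n))

/-!
Put `φ t = -(log (1 - t) + t) = ∑_{k ≥ 2} t ^ k / k`, so that `φ t / t ^ 2` is increasing on
`[0, 1)`. With `x = p / n` and `y_i = p_i / n ≤ η x` this gives
`φ y_i ≤ (y_i / x) ^ 2 φ x ≤ η (y_i / x) φ x`, hence `∑ φ y_i ≤ η φ x`; as `∑ y_i = x`,
`σ_n² / 2 = φ x - ∑ φ y_i ≥ (1 - η) φ x > 0`. Since `φ` itself is increasing, `p / n ≥ c`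
turns this into the uniform lower bound `-2 (1 - η) (log (1 - c) + c)`.
-/

open Real

theorem natCast_div_lt_one {p n : ℕ} (h : p < n) : (p : ℝ) / n < 1 :=
  (div_lt_one (Nat.cast_pos.2 (p.zero_le.trans_lt h))).2 (Nat.cast_lt.2 h)

theorem hasSum_pow_add_two_div_neg_log_one_sub_add {x : ℝ} (h : |x| < 1) :
    HasSum (fun n : ℕ => x ^ (n + 2) / (n + 2)) (-(log (1 - x) + x)) := by
  have hshift := (hasSum_nat_add_iff' 1).mpr (hasSum_pow_div_log_of_abs_lt_one h)
  rw [range_one, sum_singleton] at hshift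
  have hterms : (fun n : ℕ => x ^ (n + 1 + 1) / ((n + 1 : ℕ) + 1 : ℝ)) =
      fun n : ℕ => x ^ (n + 2) / (n + 2) := by
    ext n; push_cast; ring
  rwa [hterms, show -log (1 - x) - x ^ (0 + 1) / ((0 : ℕ) + 1 : ℝ) = -(log (1 - x) + x) by
    norm_num; ring] at hshift

theorem log_one_sub_add_nonpos {x : ℝ} (h1 : x < 1) : log (1 - x) + x ≤ 0 := by
  have := log_le_sub_one_of_pos (sub_pos.2 h1)
  linarith

theorem log_one_sub_add_mul_sq_le {x y : ℝ} (hy : 0 ≤ y) (hyx : y ≤ x) (hx : x < 1) :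
    (log (1 - x) + x) * y ^ 2 ≤ (log (1 - y) + y) * x ^ 2 := by
  have hx' : |x| < 1 := abs_lt.2 ⟨by linarith, hx⟩
  have hy' : |y| < 1 := abs_lt.2 ⟨by linarith, by linarith⟩
  rw [← neg_le_neg_iff, ← neg_mul, ← neg_mul]
  refine hasSum_le (fun n => ?_) ((hasSum_pow_add_two_div_neg_log_one_sub_add hy').mul_right _)
    ((hasSum_pow_add_two_div_neg_log_one_sub_add hx').mul_right _)
  have : y ^ n ≤ x ^ n := pow_le_pow_left₀ hy hyx n
  rw [div_mul_eq_mul_div, div_mul_eq_mul_div]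
  gcongr ?_ / _
  calc y ^ (n + 2) * x ^ 2 = y ^ n * (x ^ 2 * y ^ 2) := by ring
    _ ≤ x ^ n * (x ^ 2 * y ^ 2) := by gcongr
    _ = x ^ (n + 2) * y ^ 2 := by ring

theorem log_one_sub_add_le_of_le {x y : ℝ} (hy : 0 ≤ y) (hyx : y ≤ x) (hx : x < 1) :
    log (1 - x) + x ≤ log (1 - y) + y := by
  rcases hy.eq_or_lt with rfl | hy
  · simpa using log_one_sub_add_nonpos hx
  have hsq : (log (1 - x) + x) * x ^ 2 ≤ (log (1 - x) + x) * y ^ 2 :=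
    mul_le_mul_of_nonpos_left (by gcongr) (log_one_sub_add_nonpos hx)
  exact le_of_mul_le_mul_right (hsq.trans (log_one_sub_add_mul_sq_le hy.le hyx hx))
    (pow_pos (hy.trans_le hyx) 2)

theorem neg_two_mul_log_one_sub_add_pos {x η : ℝ} (hη : η < 1) (hx0 : x ≠ 0) (hx1 : x < 1) :
    0 < -2 * (1 - η) * (log (1 - x) + x) := by
  have := log_lt_sub_one_of_pos (sub_pos.2 hx1) (by contrapose! hx0; linarith)
  nlinarith

theorem mul_log_one_sub_add_le_sum {ι : Type*} {s : Finset ι} {y : ι → ℝ} {x η : ℝ}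
    (hy : ∀ i ∈ s, 0 ≤ y i) (hyη : ∀ i ∈ s, y i ≤ η * x) (hsum : ∑ i ∈ s, y i = x)
    (hx0 : 0 < x) (hx1 : x < 1) :
    η * (log (1 - x) + x) ≤ ∑ i ∈ s, (log (1 - y i) + y i) := by
  have hterm : ∀ i ∈ s, η * (log (1 - x) + x) * (y i / x) ≤ log (1 - y i) + y i := by
    intro i hi
    have hyx : y i ≤ x := hsum ▸ single_le_sum hy hi
    refine le_of_mul_le_mul_right ?_ (pow_pos hx0 2)
    calc η * (log (1 - x) + x) * (y i / x) * x ^ 2 = (log (1 - x) + x) * (y i * (η * x)) := by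
          field_simp
      _ ≤ (log (1 - x) + x) * y i ^ 2 :=
          mul_le_mul_of_nonpos_left (by nlinarith [hy i hi, hyη i hi]) (log_one_sub_add_nonpos hx1)
      _ ≤ (log (1 - y i) + y i) * x ^ 2 := log_one_sub_add_mul_sq_le (hy i hi) hyx hx1
  calc η * (log (1 - x) + x) = ∑ i ∈ s, η * (log (1 - x) + x) * (y i / x) := by
        rw [← mul_sum, ← sum_div, hsum, div_self hx0.ne', mul_one]
    _ ≤ _ := sum_le_sum hterm

theorem neg_two_mul_log_one_sub_add_le_sigSq {n p q : ℕ} {psz : ℕ → ℕ} {η : ℝ}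
    (hp : 0 < p) (hpn : p < n) (hsum : ∑ j ∈ range q, psz j = p)
    (hη : ∀ j < q, (psz j : ℝ) ≤ η * p) :
    -2 * (1 - η) * (log (1 - (p : ℝ) / n) + (p : ℝ) / n) ≤ sigSq n p q psz := by
  have hn : (0 : ℝ) < n := Nat.cast_pos.2 (hp.trans hpn)
  have key := mul_log_one_sub_add_le_sum (s := range q) (y := fun j => (psz j : ℝ) / n)
    (x := (p : ℝ) / n) (η := η) (fun j _ => by positivity)
    (fun j hj => by rw [← mul_div_assoc]; gcongr; exact hη j (mem_range.1 hj))
    (by rw [← sum_div, ← Nat.cast_sum, hsum])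
    (div_pos (Nat.cast_pos.2 hp) hn) (natCast_div_lt_one hpn)
  rw [sum_add_distrib, ← sum_div, ← Nat.cast_sum, hsum] at key
  unfold sigSq
  linarith

/-- Inequality (5.4): the lower bound `σ_n² ≥ -2(1-η)(log(1-p/n) + p/n) > 0`, and the
consequence `inf_n σ_n² > 0` along sequences with `0 < inf p/n ≤ sup p/n < 1`. -/
theorem statement_13 :
    (∀ (n p q : ℕ) (psz : ℕ → ℕ) (η : ℝ), 0 < η → η < 1 →
      2 ≤ p → p < n →
      (∀ j < q, 1 ≤ psz j) →
      (∑ j ∈ Finset.range q, psz j = p) →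
      (∀ j < q, (psz j : ℝ) ≤ η * p) →
      -2 * (1 - η) * (Real.log (1 - (p : ℝ) / n) + (p : ℝ) / n) ≤ sigSq n p q psz ∧
        0 < -2 * (1 - η) * (Real.log (1 - (p : ℝ) / n) + (p : ℝ) / n)) ∧
    (∀ (p q : ℕ → ℕ) (psz : ℕ → ℕ → ℕ) (η : ℝ), 0 < η → η < 1 →
      (∀ n, 3 ≤ n → 2 ≤ p n) → (∀ n, 3 ≤ n → p n < n) →
      (∀ n, 3 ≤ n → ∀ j < q n, 1 ≤ psz n j) →
      (∀ n, 3 ≤ n → ∑ j ∈ Finset.range (q n), psz n j = p n) →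
      (∀ n, 3 ≤ n → ∀ j < q n, (psz n j : ℝ) ≤ η * p n) →
      (∃ c > 0, ∀ n, 3 ≤ n → c ≤ (p n : ℝ) / n) →
      (∃ C < 1, ∀ n, 3 ≤ n → (p n : ℝ) / n ≤ C) →
      ∃ c > 0, ∀ n, 3 ≤ n → c ≤ sigSq n (p n) (q n) (psz n)) := by
  refine ⟨fun n p q psz η _ hη1 hp2 hpn _ hsum hη => ⟨?_, ?_⟩, ?_⟩
  · exact neg_two_mul_log_one_sub_add_le_sigSq (by omega) hpn hsum hη
  · exact neg_two_mul_log_one_sub_add_pos hη1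
      (div_pos (Nat.cast_pos.2 (by omega)) (Nat.cast_pos.2 (by omega))).ne' (natCast_div_lt_one hpn)
  · rintro p q psz η _ hη1 hp2 hpn _ hsum hη ⟨c, hc0, hc⟩ _
    have hc1 : c < 1 := (hc 3 le_rfl).trans_lt (natCast_div_lt_one (hpn 3 le_rfl))
    refine ⟨_, neg_two_mul_log_one_sub_add_pos hη1 hc0.ne' hc1, fun n hn => ?_⟩
    have hmono := log_one_sub_add_le_of_le hc0.le (hc n hn) (natCast_div_lt_one (hpn n hn))
    have hbound := neg_two_mul_log_one_sub_add_le_sigSq (by have := hp2 n hn; omega) (hpn n hn)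
      (hsum n hn) (hη n hn)
    nlinarith
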